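/- In a cube diagram, connect two markings by an axis-parallel segment whenever exactly one of their three coordinates differs and they satisfy the connection rule (segments go from X to Y, from Y to Z, or from Z to X). Then every marking is the endpoint of exactly two segments, and consequently the resulting 1-complex is a disjoint union of cycles. -/

import Mathlib

/-- `a` lies strictly between `b` and `c`. -/
def StrictlyBetween {n : ℕ} (a b c : Fin n) : Prop :=
  min b c < a ∧ a < max b c

/-- Two points of the cube differ in exactly one coordinate (so the segment
joining them is axis-parallel). -/
def SegRel {n : ℕ} (p q : Fin n × Fin n × Fin n) : Prop :=
  (p.1 ≠ q.1 ∧ p.2.1 = q.2.1 ∧ p.2.2 = q.2.2) ∨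
  (p.1 = q.1 ∧ p.2.1 ≠ q.2.1 ∧ p.2.2 = q.2.2) ∨
  (p.1 = q.1 ∧ p.2.1 = q.2.1 ∧ p.2.2 ≠ q.2.2)

/-- A cube diagram of size `n` (markings `X`, `Y`, `Z`, one of each type per
flat, right-angle/corner conditions, crossing conditions). -/
structure CubeDiagram (n : ℕ) where
  X : Fin n → Fin n × Fin n × Fin n
  Y : Fin n → Fin n × Fin n × Fin n
  Z : Fin n → Fin n × Fin n × Fin n
  Xx : Function.Bijective fun i => (X i).1
  Xy : Function.Bijective fun i => (X i).2.1
  Xz : Function.Bijective fun i => (X i).2.2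
  Yx : Function.Bijective fun i => (Y i).1
  Yy : Function.Bijective fun i => (Y i).2.1
  Yz : Function.Bijective fun i => (Y i).2.2
  Zx : Function.Bijective fun i => (Z i).1
  Zy : Function.Bijective fun i => (Z i).2.1
  Zz : Function.Bijective fun i => (Z i).2.2
  XY : ∀ i, ∃ j, (X i).1 = (Y j).1 ∧ (X i).2.1 = (Y j).2.1 ∧ (X i).2.2 ≠ (Y j).2.2
  YZ : ∀ j, ∃ k, (Y j).2.1 = (Z k).2.1 ∧ (Y j).2.2 = (Z k).2.2 ∧ (Y j).1 ≠ (Z k).1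
  ZX : ∀ k, ∃ i, (Z k).1 = (X i).1 ∧ (Z k).2.2 = (X i).2.2 ∧ (Z k).2.1 ≠ (X i).2.1
  -- conversely, by the right-angle and corner conditions any segment joining
  -- an X to a Y is z-parallel, a Y to a Z is x-parallel, and a Z to an X is
  -- y-parallel
  XY' : ∀ i j, SegRel (X i) (Y j) → (X i).1 = (Y j).1 ∧ (X i).2.1 = (Y j).2.1
  YZ' : ∀ j k, SegRel (Y j) (Z k) → (Y j).2.1 = (Z k).2.1 ∧ (Y j).2.2 = (Z k).2.2
  ZX' : ∀ k i, SegRel (Z k) (X i) → (Z k).1 = (X i).1 ∧ (Z k).2.2 = (X i).2.2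
  cross_xy : ∀ i j k k',
    (Y j).2.1 = (Z k).2.1 → (Y j).2.2 = (Z k).2.2 →
    (Z k').1 = (X i).1 → (Z k').2.2 = (X i).2.2 →
    StrictlyBetween (X i).1 (Y j).1 (Z k).1 →
    StrictlyBetween (Y j).2.1 (Z k').2.1 (X i).2.1 →
    (Y j).2.2 < (X i).2.2
  cross_yz : ∀ i j k,
    (X i).1 = (Y j).1 → (X i).2.1 = (Y j).2.1 →
    (∃ i', (Z k).1 = (X i').1 ∧ (Z k).2.2 = (X i').2.2 ∧
      StrictlyBetween (X i).2.1 (Z k).2.1 (X i').2.1) →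
    StrictlyBetween (Z k).2.2 (X i).2.2 (Y j).2.2 →
    (Z k).1 < (X i).1
  cross_zx : ∀ i j j' k,
    (X i).1 = (Y j').1 → (X i).2.1 = (Y j').2.1 →
    (Y j).2.1 = (Z k).2.1 → (Y j).2.2 = (Z k).2.2 →
    StrictlyBetween (X i).1 (Y j).1 (Z k).1 →
    StrictlyBetween (Y j).2.2 (X i).2.2 (Y j').2.2 →
    (X i).2.1 < (Y j).2.1

/-- The marking (as a point of the cube) corresponding to a vertex of the
1-complex of a cube diagram: vertices are the `3n` markings, indexed by type
(`0` for `X`, `1` for `Y`, `2` for `Z`) and index. -/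
def CubeDiagram.pt {n : ℕ} (C : CubeDiagram n) (v : Fin 3 × Fin n) :
    Fin n × Fin n × Fin n :=
  ![C.X, C.Y, C.Z] v.1 v.2

/-- The segments of a cube diagram: an `X` is joined to a `Y`, a `Y` to a `Z`,
or a `Z` to an `X`, whenever exactly one of their coordinates differs. -/
def CubeDiagram.segGraph {n : ℕ} (C : CubeDiagram n) : SimpleGraph (Fin 3 × Fin n) :=
  SimpleGraph.fromRel (fun u v =>
    ((u.1 = 0 ∧ v.1 = 1) ∨ (u.1 = 1 ∧ v.1 = 2) ∨ (u.1 = 2 ∧ v.1 = 0)) ∧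
      SegRel (C.pt u) (C.pt v))

/-!
A marking of type `s` (`X, Y, Z` = `0, 1, 2`) is joined to one of type `s + 1` exactly when
the two share coordinate `s` (`x` for `X`–`Y`, `y` for `Y`–`Z`, `z` for `Z`–`X`). Since every
coordinate is a bijection on the markings of each type, each marking has exactly one such
successor and one predecessor, and these have different types. So the segment graph is
2-regular, and a finite 2-regular graph is a disjoint union of cycles.
-/

theorem SimpleGraph.IsCycles.exists_isCycle {V : Type*} {G : SimpleGraph V} [Finite V]
    (hG : G.IsCycles) {v : V} (hv : (G.neighborSet v).Nonempty) :
    ∃ p : G.Walk v v, p.IsCycle :=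
  let ⟨p, hp, _⟩ := hG.exists_cycle_toSubgraph_verts_eq_connectedComponentSupp
    (c := G.connectedComponentMk v) rfl hv
  ⟨p, hp⟩

namespace CubeDiagram

variable {n : ℕ} (C : CubeDiagram n)

def coord (t : Fin 3) : Fin n × Fin n × Fin n → Fin n :=
  ![Prod.fst, fun p => p.2.1, fun p => p.2.2] t

lemma bijective_coord_pt (s t : Fin 3) : Function.Bijective fun i => coord t (C.pt (s, i)) := by
  fin_cases s <;> fin_cases t
  exacts [C.Xx, C.Xy, C.Xz, C.Yx, C.Yy, C.Yz, C.Zx, C.Zy, C.Zz]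

lemma segRel_X_Y_iff (i j : Fin n) : SegRel (C.X i) (C.Y j) ↔ (C.X i).1 = (C.Y j).1 := by
  refine ⟨fun h => (C.XY' i j h).1, fun h => ?_⟩
  obtain ⟨j', hx, hy, hz⟩ := C.XY i
  obtain rfl : j = j' := C.Yx.injective (h.symm.trans hx)
  exact Or.inr (Or.inr ⟨hx, hy, hz⟩)

lemma segRel_Y_Z_iff (j k : Fin n) : SegRel (C.Y j) (C.Z k) ↔ (C.Y j).2.1 = (C.Z k).2.1 := by
  refine ⟨fun h => (C.YZ' j k h).1, fun h => ?_⟩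
  obtain ⟨k', hy, hz, hx⟩ := C.YZ j
  obtain rfl : k = k' := C.Zy.injective (h.symm.trans hy)
  exact Or.inl ⟨hx, hy, hz⟩

lemma segRel_Z_X_iff (k i : Fin n) : SegRel (C.Z k) (C.X i) ↔ (C.Z k).2.2 = (C.X i).2.2 := by
  refine ⟨fun h => (C.ZX' k i h).2, fun h => ?_⟩
  obtain ⟨i', hx, hz, hy⟩ := C.ZX k
  obtain rfl : i = i' := C.Xz.injective (h.symm.trans hz)
  exact Or.inr (Or.inl ⟨hx, hy, hz⟩)

lemma segRel_pt_iff {s t : Fin 3} (hst : t = s + 1) (i j : Fin n) :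
    SegRel (C.pt (s, i)) (C.pt (t, j)) ↔ coord s (C.pt (s, i)) = coord s (C.pt (t, j)) := by
  subst hst
  fin_cases s
  exacts [C.segRel_X_Y_iff i j, C.segRel_Y_Z_iff i j, C.segRel_Z_X_iff i j]

lemma existsUnique_segRel_succ (v : Fin 3 × Fin n) :
    ∃! j, SegRel (C.pt v) (C.pt (v.1 + 1, j)) := by
  simp_rw [C.segRel_pt_iff rfl, eq_comm (a := coord v.1 (C.pt v))]
  exact (C.bijective_coord_pt _ _).existsUnique _

lemma existsUnique_segRel_pred (v : Fin 3 × Fin n) :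
    ∃! i, SegRel (C.pt (v.1 - 1, i)) (C.pt v) := by
  simp_rw [C.segRel_pt_iff (sub_add_cancel v.1 1).symm]
  exact (C.bijective_coord_pt _ _).existsUnique _

lemma segGraph_adj_iff (v w : Fin 3 × Fin n) :
    C.segGraph.Adj v w ↔
      (w.1 = v.1 + 1 ∧ SegRel (C.pt v) (C.pt w)) ∨ (w.1 = v.1 - 1 ∧ SegRel (C.pt w) (C.pt v)) := by
  have htype : ∀ s t : Fin 3,
      ((s = 0 ∧ t = 1) ∨ (s = 1 ∧ t = 2) ∨ (s = 2 ∧ t = 0)) ↔ t = s + 1 := by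
    decide
  have hpred : w.1 = v.1 - 1 ↔ v.1 = w.1 + 1 := by rw [eq_sub_iff_add_eq, eq_comm]
  have hne : ∀ t : Fin 3, t + 1 ≠ t := by decide
  rw [segGraph, SimpleGraph.fromRel_adj, htype, htype, hpred, and_iff_right_iff_imp]
  rintro (⟨h, -⟩ | ⟨h, -⟩) rfl <;> exact hne _ h.symm

lemma segGraph_neighborSet_eq_pair (v : Fin 3 × Fin n) :
    ∃ j i, C.segGraph.neighborSet v = {(v.1 + 1, j), (v.1 - 1, i)} := by
  obtain ⟨j, hj, hj_unique⟩ := C.existsUnique_segRel_succ v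
  obtain ⟨i, hi, hi_unique⟩ := C.existsUnique_segRel_pred v
  refine ⟨j, i, Set.ext fun ⟨t, k⟩ => ?_⟩
  simp only [SimpleGraph.mem_neighborSet, segGraph_adj_iff, Set.mem_insert_iff,
    Set.mem_singleton_iff, Prod.mk.injEq]
  constructor
  · rintro (⟨rfl, h⟩ | ⟨rfl, h⟩)
    exacts [Or.inl ⟨rfl, hj_unique k h⟩, Or.inr ⟨rfl, hi_unique k h⟩]
  · rintro (⟨rfl, rfl⟩ | ⟨rfl, rfl⟩)
    exacts [Or.inl ⟨rfl, hj⟩, Or.inr ⟨rfl, hi⟩]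

lemma ncard_segGraph_neighborSet (v : Fin 3 × Fin n) :
    (C.segGraph.neighborSet v).ncard = 2 := by
  obtain ⟨j, i, h⟩ := C.segGraph_neighborSet_eq_pair v
  have hne : ∀ t : Fin 3, t + 1 ≠ t - 1 := by decide
  rw [h, Set.ncard_pair fun h => hne v.1 (congrArg Prod.fst h)]

end CubeDiagram

/-- In a cube diagram, every marking is an endpoint of exactly two segments;
consequently the 1-complex formed by the markings and segments is a disjoint
union of cycles (every marking lies on a cycle of the segment graph). -/
theorem cube_diagram_segments_form_cycles
    (n : ℕ) (C : CubeDiagram n) :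
    (∀ v, (C.segGraph.neighborSet v).ncard = 2) ∧
    (∀ v, ∃ w : C.segGraph.Walk v v, w.IsCycle) := by
  have hcycles : C.segGraph.IsCycles := fun v _ => C.ncard_segGraph_neighborSet v
  refine ⟨C.ncard_segGraph_neighborSet, fun v => hcycles.exists_isCycle ?_⟩
  exact Set.nonempty_of_ncard_ne_zero (by rw [C.ncard_segGraph_neighborSet]; decide)
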